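/- arXiv:1811.07518 — 5 statements merged into one kernel-verified Lean document; each statement's English description precedes it below -/
import Mathlib

section
/- For an $L_x \times L_y$ rectangular lattice, the number of unordered pairs of distinct lattice sites whose taxicab distance equals $m$, for $1 \le m \le \min(L_x, L_y)$, is $2mL_xL_y - (L_x+L_y)m^2 + \frac{m^3-m}{3}$. -/
/-- Taxicab distance between two integer lattice points. -/
def taxi (p q : ℤ × ℤ) : ℤ := |p.1 - q.1| + |p.2 - q.2|

/-- The `Lx × Ly` rectangular lattice `{1,…,Lx} × {1,…,Ly}`. -/
noncomputable def sites (Lx Ly : ℤ) : Finset (ℤ × ℤ) := Finset.Icc (1, 1) (Lx, Ly)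

/-- The number of unordered pairs of distinct lattice sites at taxicab distance `m`. -/
noncomputable def pairCount (Lx Ly m : ℤ) : ℕ :=
  (((sites Lx Ly).powersetCard 2).filter
    (fun s => ∃ p ∈ s, ∃ q ∈ s, p ≠ q ∧ taxi p q = m)).card

/-!
Ordered pairs at distance `m` are twice the unordered ones. Splitting `m = i + (m - i)` into the
horizontal and vertical separations, the ordered count is the convolution
`∑ i ∈ [0, m], intervalDistCount Lx i * intervalDistCount Ly (m - i)` of the one-dimensional
counts, which are `L` at distance `0` and `2 (L - k)` at distance `0 < k ≤ L`. For
`1 ≤ m ≤ min Lx Ly` the convolution is a polynomial sum in `m`, evaluated by induction.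
-/

open Finset

theorem Finset.pair_eq_pair_iff {α : Type*} [DecidableEq α] {x y z w : α} :
    ({x, y} : Finset α) = {z, w} ↔ x = z ∧ y = w ∨ x = w ∧ y = z := by
  rw [← coe_inj, coe_pair, coe_pair, Set.pair_eq_pair_iff]

theorem card_filter_offDiag_eq_two_mul {α : Type*} [DecidableEq α] (s : Finset α)
    (r : α → α → Prop) [DecidableRel r] (hr : ∀ p q, r p q → r q p) :
    #{z ∈ s.offDiag | r z.1 z.2} =
      2 * #{t ∈ s.powersetCard 2 | ∃ p ∈ t, ∃ q ∈ t, p ≠ q ∧ r p q} := by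
  rw [card_eq_sum_card_fiberwise (f := fun z => ({z.1, z.2} : Finset α)), mul_comm]
  · refine sum_const_nat fun t ht => ?_
    simp only [mem_filter, mem_powersetCard] at ht
    obtain ⟨⟨hts, hcard⟩, x, hx, y, hy, hxy, hrxy⟩ := ht
    obtain ⟨p, q, hpq, rfl⟩ := card_eq_two.mp hcard
    have hrpq : r p q := by
      simp only [mem_insert, mem_singleton] at hx hy
      rcases hx with rfl | rfl <;> rcases hy with rfl | rfl
      exacts [absurd rfl hxy, hrxy, hr _ _ hrxy, absurd rfl hxy]
    have hfiber : {z ∈ {z ∈ s.offDiag | r z.1 z.2} | ({z.1, z.2} : Finset α) = {p, q}} =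
        {(p, q), (q, p)} := by
      ext ⟨x, y⟩
      simp only [mem_filter, mem_offDiag, pair_eq_pair_iff, mem_insert, mem_singleton, Prod.mk.injEq]
      have hp := hts (mem_insert_self p {q})
      have hq := hts (mem_insert_of_mem (mem_singleton_self q))
      constructor
      · exact fun h => h.2
      · rintro (⟨rfl, rfl⟩ | ⟨rfl, rfl⟩)
        exacts [⟨⟨⟨hp, hq, hpq⟩, hrpq⟩, .inl ⟨rfl, rfl⟩⟩,
          ⟨⟨⟨hq, hp, Ne.symm hpq⟩, hr _ _ hrpq⟩, .inr ⟨rfl, rfl⟩⟩]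
    rw [hfiber, card_pair fun h => hpq (Prod.mk.inj h).1]
  · rintro ⟨x, y⟩ hxy
    simp only [coe_filter, mem_offDiag, Set.mem_ofPred_eq] at hxy ⊢
    obtain ⟨⟨hx, hy, hne⟩, hr⟩ := hxy
    refine ⟨mem_powersetCard.2 ⟨?_, card_pair hne⟩, x, by simp, y, by simp, hne, hr⟩
    intro z hz
    simp only [mem_insert, mem_singleton] at hz
    rcases hz with rfl | rfl <;> assumption

theorem card_filter_add_eq_sum {α β : Type*} (s : Finset α) (t : Finset β) (f : α → ℤ)
    (g : β → ℤ) (hf : ∀ a, 0 ≤ f a) (hg : ∀ b, 0 ≤ g b) (m : ℤ) :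
    #{x ∈ s ×ˢ t | f x.1 + g x.2 = m} =
      ∑ i ∈ Icc 0 m, #{a ∈ s | f a = i} * #{b ∈ t | g b = m - i} := by
  rw [card_eq_sum_card_fiberwise (f := fun x => f x.1) (t := Icc 0 m)]
  · refine sum_congr rfl fun i _ => ?_
    rw [← card_product, ← filter_product, filter_filter]
    congr 1
    refine filter_congr fun x _ => ?_
    omega
  · intro x hx
    have := hf x.1
    have := hg x.2
    simp only [coe_filter, Set.mem_ofPred_eq] at hx
    simp only [coe_Icc, Set.mem_Icc]
    omega

theorem card_filter_sub_eq (L d : ℤ) :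
    #{z ∈ Icc 1 L ×ˢ Icc 1 L | z.1 - z.2 = d} = (L - |d|).toNat := by
  have hfib : {z ∈ Icc 1 L ×ˢ Icc 1 L | z.1 - z.2 = d} =
      (Icc (max 1 (1 - d)) (min L (L - d))).image fun b => (b + d, b) := by
    ext ⟨a, b⟩
    simp only [mem_filter, mem_product, mem_Icc, mem_image, Prod.mk.injEq]
    constructor
    · rintro ⟨⟨⟨_, _⟩, _, _⟩, rfl⟩
      exact ⟨b, by omega, by omega, rfl⟩
    · rintro ⟨b, _, rfl, rfl⟩
      omega
  rw [hfib, card_image_of_injective _ fun _ _ h => (Prod.mk.inj h).2, Int.card_Icc]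
  cases abs_cases d <;> omega

noncomputable def intervalDistCount (L k : ℤ) : ℕ := #{z ∈ Icc 1 L ×ˢ Icc 1 L | |z.1 - z.2| = k}

theorem intervalDistCount_zero (L : ℤ) : intervalDistCount L 0 = L.toNat := by
  simpa only [intervalDistCount, abs_eq_zero, abs_zero, sub_zero] using card_filter_sub_eq L 0

theorem intervalDistCount_of_pos (L : ℤ) {k : ℤ} (hk : 0 < k) :
    intervalDistCount L k = 2 * (L - k).toNat := by
  have hsplit : {z ∈ Icc 1 L ×ˢ Icc 1 L | |z.1 - z.2| = k} =
      {z ∈ Icc 1 L ×ˢ Icc 1 L | z.1 - z.2 = k} ∪ {z ∈ Icc 1 L ×ˢ Icc 1 L | z.1 - z.2 = -k} := by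
    rw [← filter_or]
    exact filter_congr fun z _ => abs_eq hk.le
  rw [intervalDistCount, hsplit, card_union_of_disjoint, card_filter_sub_eq, card_filter_sub_eq,
    abs_neg, abs_of_pos hk, two_mul]
  exact disjoint_filter.2 fun _ _ h h' => by omega

theorem intervalDistCount_of_pos_of_le {L k : ℤ} (hk : 0 < k) (hkL : k ≤ L) :
    (intervalDistCount L k : ℤ) = 2 * (L - k) := by
  rw [intervalDistCount_of_pos L hk]
  push_cast
  rw [Int.toNat_of_nonneg (by omega)]

theorem sum_Icc_sub_mul_add (A B n : ℤ) (hn : 0 ≤ n) :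
    6 * ∑ i ∈ Icc 1 n, (A - i) * (B + i)
      = 6 * n * A * B + 3 * n * (n + 1) * (A - B) - n * (n + 1) * (2 * n + 1) := by
  induction n, hn using Int.leInduction with
  | base => simp
  | succ n hn ih =>
    rw [← insert_Icc_right_eq_Icc_add_one (by omega), sum_insert (by simp), mul_add, ih]
    ring

theorem sum_intervalDistCount_mul {Lx Ly m : ℤ} (hm : 1 ≤ m) (hx : m ≤ Lx) (hy : m ≤ Ly) :
    3 * ((∑ i ∈ Icc 0 m, intervalDistCount Lx i * intervalDistCount Ly (m - i) : ℕ) : ℤ) =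
      2 * (6 * m * Lx * Ly - 3 * (Lx + Ly) * m ^ 2 + m ^ 3 - m) := by
  have hinner : ∀ i ∈ Icc 1 (m - 1),
      (intervalDistCount Lx i : ℤ) * intervalDistCount Ly (m - i) =
        4 * ((Lx - i) * (Ly - m + i)) := by
    intro i hi
    rw [mem_Icc] at hi
    rw [intervalDistCount_of_pos_of_le (by omega) (by omega),
      intervalDistCount_of_pos_of_le (by omega) (by omega)]
    ring
  rw [← insert_Icc_add_one_left_eq_Icc (by omega : (0 : ℤ) ≤ m), zero_add,
    ← insert_Icc_sub_one_right_eq_Icc hm, sum_insert (by simp; omega), sum_insert (by simp)]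
  push_cast
  rw [sum_congr rfl hinner, ← mul_sum, sub_zero, sub_self, intervalDistCount_zero,
    intervalDistCount_zero, intervalDistCount_of_pos_of_le (by omega) hx,
    intervalDistCount_of_pos_of_le (by omega) hy, Int.toNat_of_nonneg (by omega),
    Int.toNat_of_nonneg (by omega)]
  linear_combination 2 * sum_Icc_sub_mul_add Lx (Ly - m) (m - 1) (by omega)

theorem taxi_comm (p q : ℤ × ℤ) : taxi p q = taxi q p := by
  rw [taxi, taxi, abs_sub_comm p.1, abs_sub_comm p.2]

theorem taxi_self (p : ℤ × ℤ) : taxi p p = 0 := by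
  simp [taxi]

theorem sites_eq (Lx Ly : ℤ) : sites Lx Ly = Icc 1 Lx ×ˢ Icc 1 Ly := rfl

theorem card_taxi_eq_sum (Lx Ly m : ℤ) :
    #{z ∈ sites Lx Ly ×ˢ sites Lx Ly | taxi z.1 z.2 = m} =
      ∑ i ∈ Icc 0 m, intervalDistCount Lx i * intervalDistCount Ly (m - i) := by
  rw [card_equiv (Equiv.prodProdProdComm ℤ ℤ ℤ ℤ)
    (t := {x ∈ (Icc 1 Lx ×ˢ Icc 1 Lx) ×ˢ (Icc 1 Ly ×ˢ Icc 1 Ly) |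
      |x.1.1 - x.1.2| + |x.2.1 - x.2.2| = m})]
  · exact card_filter_add_eq_sum _ _ (fun x : ℤ × ℤ => |x.1 - x.2|) (fun x : ℤ × ℤ => |x.1 - x.2|)
      (fun _ => abs_nonneg _) (fun _ => abs_nonneg _) m
  · rintro ⟨⟨a, b⟩, c, d⟩
    rw [mem_filter, mem_filter]
    simp only [sites_eq, mem_product, taxi, Equiv.prodProdProdComm_apply]
    tauto

theorem filter_offDiag_taxi_eq {m : ℤ} (hm : m ≠ 0) (s : Finset (ℤ × ℤ)) :
    {z ∈ s.offDiag | taxi z.1 z.2 = m} = {z ∈ s ×ˢ s | taxi z.1 z.2 = m} := by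
  ext ⟨p, q⟩
  simp only [mem_filter, mem_offDiag, mem_product]
  constructor
  · exact fun ⟨⟨hp, hq, _⟩, h⟩ => ⟨⟨hp, hq⟩, h⟩
  · rintro ⟨⟨hp, hq⟩, h⟩
    refine ⟨⟨hp, hq, ?_⟩, h⟩
    rintro rfl
    exact hm (h ▸ taxi_self p)

theorem two_mul_pairCount {m : ℤ} (hm : m ≠ 0) (Lx Ly : ℤ) :
    2 * pairCount Lx Ly m =
      ∑ i ∈ Icc 0 m, intervalDistCount Lx i * intervalDistCount Ly (m - i) := by
  rw [pairCount, ← card_filter_offDiag_eq_two_mul (sites Lx Ly) (fun p q => taxi p q = m)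
    fun p q h => (taxi_comm q p).trans h, filter_offDiag_taxi_eq hm, card_taxi_eq_sum]

theorem stmt0_general (Lx Ly m : ℤ)
    (hm1 : 1 ≤ m) (hm2 : m ≤ min Lx Ly) :
    (pairCount Lx Ly m : ℤ) = 2 * m * Lx * Ly - (Lx + Ly) * m ^ 2 + (m ^ 3 - m) / 3 := by
  have hsum := sum_intervalDistCount_mul hm1 (hm2.trans (min_le_left _ _))
    (hm2.trans (min_le_right _ _))
  rw [← two_mul_pairCount (by omega)] at hsum
  have hthree : 3 * (pairCount Lx Ly m : ℤ) =
      3 * (2 * m * Lx * Ly - (Lx + Ly) * m ^ 2) + (m ^ 3 - m) := by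
    push_cast at hsum
    linarith
  -- `hthree` makes `3 ∣ m ^ 3 - m` visible to `omega`, so the division is exact.
  omega

theorem stmt0 (Lx Ly m : ℤ) (hLx : 1 ≤ Lx) (hLy : 1 ≤ Ly)
    (hm1 : 1 ≤ m) (hm2 : m ≤ min Lx Ly) :
    (pairCount Lx Ly m : ℤ) = 2 * m * Lx * Ly - (Lx + Ly) * m ^ 2 + (m ^ 3 - m) / 3 :=
  stmt0_general Lx Ly m hm1 hm2
end

section
/- Consider a one-dimensional lattice of $X$ sites $\{1, \dots, X\}$ containing a contiguous block of $n$ inaccessible sites, with $n < X - 1$ and at least one accessible site on each side of the block. The number of unordered pairs of accessible sites $(i, j)$ with $i$ left of the block and $j$ right of the block and $j - i = m$ equals $\min\big(-|m - \frac{X+n}{2}| + \frac{X-n}{2},\ d\big)$ whenever this quantity is nonnegative, where $d = \min(a, b)$ and $a$ and $b$ are the numbers of accessible sites to the left and right of the block, respectively. -/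
/-!
A cross pair at distance `m` is determined by its left site `i`, and the constraints
`1 ≤ i ≤ p - 1` and `p + n ≤ i + m ≤ X` cut out an integer interval for `i`. Its length is the
minimum of `a = p - 1`, `b = X - (p + n - 1)`, `m - n` and `X - m`, and the tent function
`-|m - (X + n)/2| + (X - n)/2` is exactly `min (m - n) (X - m)`.
-/

/-- Number of unordered cross-block pairs of accessible sites `{i, j}` with
`i` strictly left of the inaccessible block `{p, …, p+n-1}`, `j` strictly right of it,
and `j - i = m`, in the one-dimensional lattice `{1, …, X}`. -/
noncomputable def crossCount (X p n m : ℤ) : ℕ :=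
  (((Finset.Icc 1 (p - 1)) ×ˢ (Finset.Icc (p + n) X)).filter
    (fun q => q.2 - q.1 = m)).card

open Finset

theorem card_filter_sub_eq_Icc_prod_Icc (a b c d m : ℤ) :
    ((Icc a b ×ˢ Icc c d).filter (fun q => q.2 - q.1 = m)).card =
      (min b (d - m) + 1 - max a (c - m)).toNat := by
  have himage : (Icc a b ×ˢ Icc c d).filter (fun q => q.2 - q.1 = m) =
      (Icc (max a (c - m)) (min b (d - m))).image (fun i => (i, i + m)) := by
    ext ⟨i, j⟩
    simp only [mem_filter, mem_product, mem_Icc, mem_image, Prod.mk.injEq, le_min_iff,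
      max_le_iff]
    constructor
    · rintro ⟨⟨⟨hai, hib⟩, hcj, hjd⟩, hdiff⟩
      exact ⟨i, ⟨⟨hai, by omega⟩, hib, by omega⟩, rfl, by omega⟩
    · rintro ⟨i, ⟨⟨hai, hci⟩, hib, hid⟩, rfl, rfl⟩
      exact ⟨⟨⟨hai, hib⟩, by omega, by omega⟩, by omega⟩
  rw [himage, card_image_of_injective _ fun i i' h => congrArg Prod.fst h, Int.card_Icc]

theorem crossCount_eq_toNat (X p n m : ℤ) :
    crossCount X p n m =
      (min (min (m - n) (X - m)) (min (p - 1) (X - (p + n - 1)))).toNat := by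
  rw [crossCount, card_filter_sub_eq_Icc_prod_Icc]
  congr 1
  omega

theorem neg_abs_sub_add_eq_min {K : Type*} [Field K] [LinearOrder K] [IsStrictOrderedRing K]
    (x u v : K) : -|x - (v + u) / 2| + (v - u) / 2 = min (x - u) (v - x) := by
  rcases le_total (x - u) (v - x) with h | h
  · rw [min_eq_left h, abs_of_nonpos (by linarith)]
    ring
  · rw [min_eq_right h, abs_of_nonneg (by linarith)]
    ring

theorem stmt7_general (X p n m : ℤ)
    (hpos : (0 : ℚ) ≤ min (-|(m : ℚ) - (X + n) / 2| + (X - n) / 2)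
      ((min (p - 1) (X - (p + n - 1)) : ℤ) : ℚ)) :
    (crossCount X p n m : ℚ) =
      min (-|(m : ℚ) - (X + n) / 2| + (X - n) / 2)
        ((min (p - 1) (X - (p + n - 1)) : ℤ) : ℚ) := by
  set K : ℤ := min (min (m - n) (X - m)) (min (p - 1) (X - (p + n - 1)))
  have hK : min (-|(m : ℚ) - (X + n) / 2| + (X - n) / 2)
      ((min (p - 1) (X - (p + n - 1)) : ℤ) : ℚ) = K := by
    rw [neg_abs_sub_add_eq_min]
    simp only [K]
    push_cast
    rfl
  rw [hK] at hpos ⊢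
  rw [crossCount_eq_toNat, ← Int.cast_natCast, Int.toNat_of_nonneg (by exact_mod_cast hpos)]

theorem stmt7 (X p n m : ℤ) (hn : 1 ≤ n) (hnX : n < X - 1)
    (hp : 2 ≤ p) (hpX : p + n - 1 ≤ X - 1)
    (hpos : (0 : ℚ) ≤ min (-|(m : ℚ) - (X + n) / 2| + (X - n) / 2)
      ((min (p - 1) (X - (p + n - 1)) : ℤ) : ℚ)) :
    (crossCount X p n m : ℚ) =
      min (-|(m : ℚ) - (X + n) / 2| + (X - n) / 2)
        ((min (p - 1) (X - (p + n - 1)) : ℤ) : ℚ) :=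
  stmt7_general X p n m hpos
end

section
/- In an $L_x \times L_y$ rectangular lattice, for a fixed site $(H_x, H_y)$, the number of sites at taxicab distance exactly $m$ from it equals $4m - \alpha(m)$, where $\alpha(m) = \sum_{i} N_i(m) + \sum_{j,k} M_{j,k}(m)$ with $N_i(m) = 1$ if $m \ge b_i$ and $0$ otherwise (for the four boundary distances $b_L = H_x$, $b_R = L_x - H_x + 1$, $b_D = H_y$, $b_U = L_y - H_y + 1$), and $M_{j,k}(m)$ given by: $0$ if $m \le \min(b_j,b_k)$; $m - \min(b_j,b_k)$ if $\min(b_j,b_k) < m \le \max(b_j,b_k)$; $2m - c_{j,k}$ if $\max(b_j,b_k) < m \le c_{j,k}-2$; and $m-1$ if $m > c_{j,k}-2$, where $c_{j,k} = b_j + b_k$ for the four corner combinations $j \in \{D,U\}$, $k \in \{L,R\}$. -/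
/-- Boundary out-of-domain count: `N_i(m) = 1` if `m ≥ b_i`, else `0`. -/
def Nfun (b m : ℤ) : ℤ := if b ≤ m then 1 else 0

/-- Corner out-of-domain count `M_{j,k}(m)` for boundary distances `bj, bk`. -/
def Mfun (bj bk m : ℤ) : ℤ :=
  if m ≤ min bj bk then 0
  else if m ≤ max bj bk then m - min bj bk
  else if m ≤ bj + bk - 2 then 2 * m - (bj + bk)
  else m - 1

/-- Total number of out-of-domain pairs at distance `m` for a site with boundary
distances `bL = Hx`, `bR = Lx - Hx + 1`, `bD = Hy`, `bU = Ly - Hy + 1`. -/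
def alphaFun (Lx Ly Hx Hy m : ℤ) : ℤ :=
  Nfun Hx m + Nfun (Lx - Hx + 1) m + Nfun Hy m + Nfun (Ly - Hy + 1) m +
    Mfun Hy Hx m + Mfun Hy (Lx - Hx + 1) m +
    Mfun (Ly - Hy + 1) Hx m + Mfun (Ly - Hy + 1) (Lx - Hx + 1) m

/-!
The taxicab sphere of radius `m ≥ 1` around `H` is the disjoint union of four arcs of `m` points
each, `{H + (a, m - a) | 1 ≤ a ≤ m}` and its images under quarter turns about `H`. The arc point
with parameter `a` lies in the lattice iff `a < b` and `m - a < c`, where `b` and `c` are the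
boundary distances in the two directions of its quadrant, so the arc loses `Nfun b m` points at
`a = m` and `Mfun b c m` points with `a < m`.
-/

open Finset

lemma Mfun_comm (bj bk m : ℤ) : Mfun bj bk m = Mfun bk bj m := by
  rw [Mfun, Mfun, min_comm, max_comm, add_comm]

lemma card_filter_arc (b c m : ℤ) (hb : 1 ≤ b) (hc : 1 ≤ c) (hm : 0 ≤ m) :
    (((Icc 1 m).filter (fun a => a < b ∧ m - a < c)).card : ℤ) = m - Nfun b m - Mfun b c m := by
  have hIcc : (Icc 1 m).filter (fun a => a < b ∧ m - a < c) =
      Icc (max 1 (m - c + 1)) (min m (b - 1)) := by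
    ext a
    simp only [mem_filter, mem_Icc]
    omega
  rw [hIcc, Int.card_Icc, Nfun, Mfun]
  split_ifs <;> omega

section Sphere

variable (Lx Ly Hx Hy m : ℤ)

noncomputable def taxiSphere : Finset (ℤ × ℤ) :=
  (sites Lx Ly).filter (fun p => taxi p (Hx, Hy) = m)

lemma mem_taxiSphere {p : ℤ × ℤ} :
    p ∈ taxiSphere Lx Ly Hx Hy m ↔
      1 ≤ p.1 ∧ p.1 ≤ Lx ∧ 1 ≤ p.2 ∧ p.2 ≤ Ly ∧ |p.1 - Hx| + |p.2 - Hy| = m := by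
  rw [taxiSphere, mem_filter, sites, mem_Icc, Prod.le_def, Prod.le_def, taxi]
  tauto

lemma card_taxiSphere_eq_sum_arcs (hm : m ≠ 0) :
    (taxiSphere Lx Ly Hx Hy m).card =
      ((taxiSphere Lx Ly Hx Hy m).filter (fun p => Hx < p.1 ∧ Hy ≤ p.2)).card +
      ((taxiSphere Lx Ly Hx Hy m).filter (fun p => p.1 ≤ Hx ∧ Hy < p.2)).card +
      ((taxiSphere Lx Ly Hx Hy m).filter (fun p => p.1 < Hx ∧ p.2 ≤ Hy)).card +
      ((taxiSphere Lx Ly Hx Hy m).filter (fun p => Hx ≤ p.1 ∧ p.2 < Hy)).card := by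
  rw [card_eq_sum_ones, card_filter, card_filter, card_filter, card_filter, ← sum_add_distrib,
    ← sum_add_distrib, ← sum_add_distrib]
  refine sum_congr rfl fun p hp => ?_
  rw [mem_taxiSphere, abs_eq_max_neg, abs_eq_max_neg] at hp
  split_ifs <;> omega

lemma card_arc_upper_right (hHx : 0 ≤ Hx) (hHy : 1 ≤ Hy) :
    ((taxiSphere Lx Ly Hx Hy m).filter (fun p => Hx < p.1 ∧ Hy ≤ p.2)).card =
      ((Icc 1 m).filter (fun a => a < Lx - Hx + 1 ∧ m - a < Ly - Hy + 1)).card := by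
  refine card_nbij' (fun p => p.1 - Hx) (fun a => (Hx + a, Hy + (m - a))) ?_ ?_ ?_ ?_ <;>
  · intro p hp
    simp only [coe_filter, Set.mem_ofPred_eq, mem_taxiSphere, mem_Icc, abs_eq_max_neg,
      Prod.ext_iff] at *
    omega

lemma card_arc_upper_left (hHx : Hx ≤ Lx) (hHy : 0 ≤ Hy) :
    ((taxiSphere Lx Ly Hx Hy m).filter (fun p => p.1 ≤ Hx ∧ Hy < p.2)).card =
      ((Icc 1 m).filter (fun a => a < Ly - Hy + 1 ∧ m - a < Hx)).card := by
  refine card_nbij' (fun p => p.2 - Hy) (fun a => (Hx - (m - a), Hy + a)) ?_ ?_ ?_ ?_ <;>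
  · intro p hp
    simp only [coe_filter, Set.mem_ofPred_eq, mem_taxiSphere, mem_Icc, abs_eq_max_neg,
      Prod.ext_iff] at *
    omega

lemma card_arc_lower_left (hHx : Hx ≤ Lx + 1) (hHy : Hy ≤ Ly) :
    ((taxiSphere Lx Ly Hx Hy m).filter (fun p => p.1 < Hx ∧ p.2 ≤ Hy)).card =
      ((Icc 1 m).filter (fun a => a < Hx ∧ m - a < Hy)).card := by
  refine card_nbij' (fun p => Hx - p.1) (fun a => (Hx - a, Hy - (m - a))) ?_ ?_ ?_ ?_ <;>
  · intro p hp
    simp only [coe_filter, Set.mem_ofPred_eq, mem_taxiSphere, mem_Icc, abs_eq_max_neg,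
      Prod.ext_iff] at *
    omega

lemma card_arc_lower_right (hHx : 1 ≤ Hx) (hHy : Hy ≤ Ly + 1) :
    ((taxiSphere Lx Ly Hx Hy m).filter (fun p => Hx ≤ p.1 ∧ p.2 < Hy)).card =
      ((Icc 1 m).filter (fun a => a < Hy ∧ m - a < Lx - Hx + 1)).card := by
  refine card_nbij' (fun p => Hy - p.2) (fun a => (Hx + (m - a), Hy - a)) ?_ ?_ ?_ ?_ <;>
  · intro p hp
    simp only [coe_filter, Set.mem_ofPred_eq, mem_taxiSphere, mem_Icc, abs_eq_max_neg,
      Prod.ext_iff] at *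
    omega

end Sphere

theorem stmt9 (Lx Ly Hx Hy m : ℤ) (hHx1 : 1 ≤ Hx) (hHx2 : Hx ≤ Lx)
    (hHy1 : 1 ≤ Hy) (hHy2 : Hy ≤ Ly) (hm : 1 ≤ m) :
    (((sites Lx Ly).filter (fun p => taxi p (Hx, Hy) = m)).card : ℤ) =
      4 * m - alphaFun Lx Ly Hx Hy m := by
  change ((taxiSphere Lx Ly Hx Hy m).card : ℤ) = _
  rw [card_taxiSphere_eq_sum_arcs Lx Ly Hx Hy m (by omega)]
  push_cast
  rw [card_arc_upper_right Lx Ly Hx Hy m (by omega) hHy1,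
    card_arc_upper_left Lx Ly Hx Hy m hHx2 (by omega),
    card_arc_lower_left Lx Ly Hx Hy m (by omega) hHy2,
    card_arc_lower_right Lx Ly Hx Hy m hHx1 (by omega),
    card_filter_arc _ _ m (by omega) (by omega) (by omega),
    card_filter_arc _ _ m (by omega) hHx1 (by omega),
    card_filter_arc _ _ m hHx1 hHy1 (by omega),
    card_filter_arc _ _ m hHy1 (by omega) (by omega),
    alphaFun, Mfun_comm (Lx - Hx + 1), Mfun_comm Hx Hy]
  ring
end

section
/- In a one-dimensional lattice of $L$ sites with a single inaccessible site at position $p$, the number of unordered pairs of accessible sites on opposite sides of $p$ with separation $|i-j| = m$ is $\min\big(-|m - \frac{L+1}{2}| + \frac{L-1}{2},\ \min(p, L-p+1) - 1\big)$ when this is nonnegative, and $0$ otherwise; in particular it is nonzero only for $2 \le m \le L-1$. -/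
/-- Number of unordered pairs `{i, j}` of accessible sites of the one-dimensional lattice
`{1,…,L}` with `i < p < j` and separation `j - i = m`, where `p` is the single
inaccessible site. -/
noncomputable def crossCount1 (L p m : ℤ) : ℕ :=
  (((Finset.Icc 1 (p - 1)) ×ˢ (Finset.Icc (p + 1) L)).filter
    (fun q => q.2 - q.1 = m)).card

/-! A crossing pair is determined by its left end `i`, which ranges over an interval; its length
`min (p-1) (L-m) - max 1 (p+1-m) + 1` is the minimum of the four distances `m-1`, `L-m`, `p-1`,
`L-p`, and the tent `-|m - (L+1)/2| + (L-1)/2` is the first two of them in disguise. -/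

lemma crossCount1_eq_card_Icc (L p m : ℤ) :
    crossCount1 L p m = (Finset.Icc (max 1 (p + 1 - m)) (min (p - 1) (L - m))).card := by
  unfold crossCount1
  refine Finset.card_bij' (fun q _ => q.1) (fun i _ => (i, i + m)) ?_ ?_ ?_ (fun _ _ => rfl)
  · intro q hq
    simp only [Finset.mem_filter, Finset.mem_product, Finset.mem_Icc] at hq ⊢
    omega
  · intro i hi
    simp only [Finset.mem_filter, Finset.mem_product, Finset.mem_Icc] at hi ⊢
    omega
  · intro q hq
    simp only [Finset.mem_filter, Finset.mem_product, Finset.mem_Icc] at hq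
    ext
    · rfl
    · simp only; omega

lemma crossCount1_eq_max (L p m : ℤ) :
    (crossCount1 L p m : ℤ) = max 0 (min (min (m - 1) (L - m)) (min (p - 1) (L - p))) := by
  rw [crossCount1_eq_card_Icc, Int.card_Icc]
  omega

lemma neg_abs_sub_midpoint_add_eq_min {K : Type*} [Field K] [LinearOrder K]
    [IsStrictOrderedRing K] (a b x : K) :
    -|x - (a + b) / 2| + (b - a) / 2 = min (x - a) (b - x) := by
  rcases abs_cases (x - (a + b) / 2) with ⟨h, _⟩ | ⟨h, _⟩ <;>
    rcases min_cases (x - a) (b - x) with ⟨h', _⟩ | ⟨h', _⟩ <;> linarith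

theorem stmt14_general (L p m : ℤ) :
    (((0 : ℚ) ≤ min (-|(m : ℚ) - (L + 1) / 2| + (L - 1) / 2)
        (((min p (L - p + 1) : ℤ) : ℚ) - 1) →
      (crossCount1 L p m : ℚ) =
        min (-|(m : ℚ) - (L + 1) / 2| + (L - 1) / 2)
          (((min p (L - p + 1) : ℤ) : ℚ) - 1)) ∧
    (min (-|(m : ℚ) - (L + 1) / 2| + (L - 1) / 2)
        (((min p (L - p + 1) : ℤ) : ℚ) - 1) < 0 →
      crossCount1 L p m = 0)) ∧
    (crossCount1 L p m ≠ 0 → 2 ≤ m ∧ m ≤ L - 1) := by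
  have hcount := crossCount1_eq_max L p m
  set N : ℤ := min (min (m - 1) (L - m)) (min (p - 1) (L - p))
  have hN : min (-|(m : ℚ) - (L + 1) / 2| + (L - 1) / 2)
      (((min p (L - p + 1) : ℤ) : ℚ) - 1) = N := by
    rw [add_comm (L : ℚ), neg_abs_sub_midpoint_add_eq_min, Int.cast_min, ← min_sub_sub_right]
    push_cast [N]
    ring_nf
  rw [hN]
  refine ⟨⟨fun h => ?_, fun h => ?_⟩, fun h => ?_⟩
  · have : (0 : ℤ) ≤ N := by exact_mod_cast h
    exact_mod_cast (hcount.trans (max_eq_right this))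
  · have : N < 0 := by exact_mod_cast h
    omega
  · omega

theorem stmt14 (L p m : ℤ) (hp1 : 1 < p) (hpL : p < L) :
    (((0 : ℚ) ≤ min (-|(m : ℚ) - (L + 1) / 2| + (L - 1) / 2)
        (((min p (L - p + 1) : ℤ) : ℚ) - 1) →
      (crossCount1 L p m : ℚ) =
        min (-|(m : ℚ) - (L + 1) / 2| + (L - 1) / 2)
          (((min p (L - p + 1) : ℤ) : ℚ) - 1)) ∧
    (min (-|(m : ℚ) - (L + 1) / 2| + (L - 1) / 2)
        (((min p (L - p + 1) : ℤ) : ℚ) - 1) < 0 →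
      crossCount1 L p m = 0)) ∧
    (crossCount1 L p m ≠ 0 → 2 ≤ m ∧ m ≤ L - 1) :=
  stmt14_general L p m
end

section
/- In a one-dimensional lattice of $X$ sites with a contiguous block of $n$ inaccessible sites ($1 \le n \le X - 2$) with $a \ge 1$ accessible sites to the left and $b \ge 1$ to the right ($a + n + b = X$), the total number of cross-block unordered pairs of accessible sites is $ab$, and this equals $\sum_{m} \max\big(0, \min(-|m - \frac{X+n}{2}| + \frac{X-n}{2}, \min(a,b))\big)$ where the sum ranges over integers $m$ with $n+1 \le m \le X-1$. -/
/-!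
Sort the cross-block pairs `(i, j)` by their separation `m = j - i`. For fixed `m` the left
site ranges over an interval, so the fibre has `max(0, min(m - n, X - m, a, b))` elements,
and `min (m - n) (X - m)` is exactly the tent `-|m - (X + n) / 2| + (X - n) / 2`.
-/

open Finset

theorem card_filter_sub_eq_Icc_prod_Icc_s17 (p q r s m : ℤ) :
    ((filter (fun x => x.2 - x.1 = m) (Icc p q ×ˢ Icc r s)).card : ℤ) =
      max 0 (min q (s - m) - max p (r - m) + 1) := by
  have hfiber : filter (fun x => x.2 - x.1 = m) (Icc p q ×ˢ Icc r s) =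
      (Icc (max p (r - m)) (min q (s - m))).image fun i => (i, i + m) := by
    ext ⟨i, j⟩
    simp only [mem_filter, mem_product, mem_Icc, mem_image, Prod.mk.injEq, max_le_iff, le_min_iff]
    constructor
    · rintro ⟨⟨⟨hpi, hiq⟩, hrj, hjs⟩, hm⟩
      exact ⟨i, by omega, rfl, by omega⟩
    · rintro ⟨k, hk, rfl, rfl⟩
      omega
  rw [hfiber, card_image_of_injective _ fun _ _ h => congrArg Prod.fst h, Int.card_Icc]
  omega

theorem card_Icc_prod_Icc_eq_sum_card_filter_sub (p q r s : ℤ) :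
    (Icc p q ×ˢ Icc r s).card =
      ∑ m ∈ Icc (r - q) (s - p),
        (filter (fun x => x.2 - x.1 = m) (Icc p q ×ˢ Icc r s)).card := by
  apply card_eq_sum_card_fiberwise
  intro x hx
  simp only [coe_product, Set.mem_prod, mem_coe, mem_Icc] at hx ⊢
  omega

theorem neg_abs_sub_midpoint_add_half {K : Type*} [Field K] [LinearOrder K] [IsStrictOrderedRing K]
    (x y m : K) : -|m - (x + y) / 2| + (x - y) / 2 = min (m - y) (x - m) := by
  rcases abs_cases (m - (x + y) / 2) with ⟨h, hm⟩ | ⟨h, hm⟩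
  · rw [h, min_eq_right (by linarith)]; ring
  · rw [h, min_eq_left (by linarith)]; ring

theorem stmt17_general (X n a b : ℤ)
    (ha : 1 ≤ a) (hb : 1 ≤ b) (hsum : a + n + b = X) :
    (((Finset.Icc 1 a) ×ˢ (Finset.Icc (a + n + 1) X)).card : ℤ) = a * b ∧
    ((a * b : ℤ) : ℚ) =
      ∑ m ∈ Finset.Icc (n + 1) (X - 1),
        max 0 (min (-|(m : ℚ) - (X + n) / 2| + (X - n) / 2) ((min a b : ℤ) : ℚ)) := by
  have hcard : (((Icc 1 a) ×ˢ (Icc (a + n + 1) X)).card : ℤ) = a * b := by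
    rw [card_product, Nat.cast_mul, Int.card_Icc, Int.card_Icc,
      Int.toNat_of_nonneg (by omega), Int.toNat_of_nonneg (by omega)]
    congr 1 <;> omega
  refine ⟨hcard, ?_⟩
  have hrange : Icc (n + 1) (X - 1) = Icc (a + n + 1 - a) (X - 1) := by congr 1; ring
  rw [← hcard, card_Icc_prod_Icc_eq_sum_card_filter_sub, hrange]
  push_cast
  refine sum_congr rfl fun m _ => ?_
  have hcount : ((filter (fun x => x.2 - x.1 = m) (Icc 1 a ×ˢ Icc (a + n + 1) X)).card : ℤ) =
      max 0 (min (min (m - n) (X - m)) (min a b)) := by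
    rw [card_filter_sub_eq_Icc_prod_Icc_s17]
    omega
  rw [neg_abs_sub_midpoint_add_half]
  exact_mod_cast hcount

theorem stmt17 (X n a b : ℤ) (hn : 1 ≤ n) (hnX : n ≤ X - 2)
    (ha : 1 ≤ a) (hb : 1 ≤ b) (hsum : a + n + b = X) :
    (((Finset.Icc 1 a) ×ˢ (Finset.Icc (a + n + 1) X)).card : ℤ) = a * b ∧
    ((a * b : ℤ) : ℚ) =
      ∑ m ∈ Finset.Icc (n + 1) (X - 1),
        max 0 (min (-|(m : ℚ) - (X + n) / 2| + (X - n) / 2) ((min a b : ℤ) : ℚ)) :=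
  stmt17_general X n a b ha hb hsum
end
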